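/- Let f(z) = z - ∑_{n≥2} b_n z^n with b_n ≥ 0 and ∑_{n≥2} Φ_n b_n ≤ 1 - α, where Φ_n > 0 is increasing in n ≥ 2 and 0 ≤ α < 1. Then 1 - ∑_{n≥2} b_n z^{n-1} is subordinate to 1 - ((1-α)/Φ_2) z on the unit disc. -/

import Mathlib

open Metric

/-- Subordination of `g` to `f` on the unit disc. -/
def Subordinate (g f : ℂ → ℂ) : Prop :=
  ∃ w : ℂ → ℂ, AnalyticOnNhd ℂ w (ball (0 : ℂ) 1) ∧ w 0 = 0 ∧
    (∀ z ∈ ball (0 : ℂ) 1, w z ∈ ball (0 : ℂ) 1) ∧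
    ∀ z ∈ ball (0 : ℂ) 1, g z = f (w z)

/-!
The sum `S z = ∑_{n ≥ 2} b_n z^{n-1}` is analytic on the disc with `|S z| ≤ (∑ b_n) |z|`, and
monotonicity of `Φ` gives `Φ_2 ∑ b_n ≤ ∑ Φ_n b_n ≤ 1 - α`. Hence `w = (Φ_2 / (1 - α)) S` maps the
disc into itself, fixes `0`, and `1 - S = 1 - ((1 - α) / Φ_2) w`.
-/

section CoefficientBound

variable {Φ b : ℕ → ℝ} {c : ℝ}

theorem summable_of_summable_mul_of_le (hc : 0 < c) (hΦ : ∀ n, c ≤ Φ n) (hb : ∀ n, 0 ≤ b n)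
    (h : Summable fun n => Φ n * b n) : Summable b := by
  refine (h.mul_left c⁻¹).of_nonneg_of_le hb fun n => ?_
  rw [← mul_assoc, ← div_eq_inv_mul]
  exact le_mul_of_one_le_left (hb n) ((one_le_div hc).2 (hΦ n))

theorem mul_tsum_le_tsum_mul (hc : 0 < c) (hΦ : ∀ n, c ≤ Φ n) (hb : ∀ n, 0 ≤ b n)
    (h : Summable fun n => Φ n * b n) : c * ∑' n, b n ≤ ∑' n, Φ n * b n := by
  rw [← tsum_mul_left]
  exact (summable_of_summable_mul_of_le hc hΦ hb h).mul_left c |>.tsum_le_tsum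
    (fun n => mul_le_mul_of_nonneg_right (hΦ n) (hb n)) h

end CoefficientBound

section PowerSeries

variable {a : ℕ → ℂ}

theorem norm_mul_pow_succ_le (n : ℕ) {z : ℂ} (hz : ‖z‖ ≤ 1) :
    ‖a n * z ^ (n + 1)‖ ≤ ‖a n‖ * ‖z‖ := by
  rw [norm_mul, norm_pow, pow_succ]
  gcongr
  exact mul_le_of_le_one_left (norm_nonneg z) (pow_le_one₀ (norm_nonneg z) hz)

theorem norm_tsum_mul_pow_succ_le (ha : Summable fun n => ‖a n‖) {z : ℂ} (hz : ‖z‖ ≤ 1) :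
    ‖∑' n, a n * z ^ (n + 1)‖ ≤ (∑' n, ‖a n‖) * ‖z‖ := by
  rw [← tsum_mul_right]
  exact tsum_of_norm_bounded (ha.mul_right _).hasSum fun n => norm_mul_pow_succ_le n hz

theorem analyticOnNhd_tsum_mul_pow_succ (ha : Summable fun n => ‖a n‖) :
    AnalyticOnNhd ℂ (fun z => ∑' n, a n * z ^ (n + 1)) (ball 0 1) := by
  refine DifferentiableOn.analyticOnNhd ?_ isOpen_ball
  refine Complex.differentiableOn_tsum_of_summable_norm ha (fun n => by fun_prop) isOpen_ball
    fun n z hz => ?_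
  have hz : ‖z‖ ≤ 1 := (mem_ball_zero_iff.1 hz).le
  simpa using (norm_mul_pow_succ_le n hz).trans (mul_le_of_le_one_right (norm_nonneg _) hz)

end PowerSeries

theorem subordinate_comp_of_norm_lt {F S : ℂ → ℂ} {c : ℂ} (hS : AnalyticOnNhd ℂ S (ball 0 1))
    (hS0 : S 0 = 0) (hSc : ∀ z ∈ ball (0 : ℂ) 1, ‖S z‖ < ‖c‖) :
    Subordinate (fun z => F (S z)) (fun z => F (c * z)) := by
  have hc : c ≠ 0 := norm_pos_iff.1 ((norm_nonneg _).trans_lt (hSc 0 (mem_ball_self one_pos)))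
  refine ⟨fun z => c⁻¹ * S z, fun z hz => analyticAt_const.mul (hS z hz), by simp [hS0],
    fun z hz => ?_, fun z _ => by simp only [mul_inv_cancel_left₀ hc]⟩
  rw [mem_ball_zero_iff, norm_mul, norm_inv, inv_mul_lt_one₀ (norm_pos_iff.2 hc)]
  exact hSc z hz

theorem subordination_of_coeff_bound_general (α : ℝ) (hα1 : α < 1)
    (Φ : ℕ → ℝ) (hΦpos : ∀ n : ℕ, 2 ≤ n → 0 < Φ n)
    (hΦmono : ∀ m n : ℕ, 2 ≤ m → m ≤ n → Φ m ≤ Φ n)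
    (b : ℕ → ℝ) (hb : ∀ n, 0 ≤ b n)
    (hsum : Summable (fun n : ℕ => Φ (n + 2) * b (n + 2)))
    (hbound : (∑' n : ℕ, Φ (n + 2) * b (n + 2)) ≤ 1 - α) :
    Subordinate (fun z => 1 - ∑' n : ℕ, (b (n + 2) : ℂ) * z ^ (n + 1))
      (fun z => 1 - (((1 - α) / Φ 2 : ℝ) : ℂ) * z) := by
  have hΦ2 : 0 < Φ 2 := hΦpos 2 le_rfl
  have hΦ : ∀ n, Φ 2 ≤ Φ (n + 2) := fun n => hΦmono 2 (n + 2) le_rfl (by omega)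
  have hb' : ∀ n, 0 ≤ b (n + 2) := fun n => hb (n + 2)
  have hnorm : (fun n => ‖(b (n + 2) : ℂ)‖) = fun n => b (n + 2) := by
    simp only [Complex.norm_real, Real.norm_of_nonneg (hb' _)]
  have hsummable : Summable fun n => ‖(b (n + 2) : ℂ)‖ :=
    hnorm ▸ summable_of_summable_mul_of_le hΦ2 hΦ hb' hsum
  have hB : ∑' n, b (n + 2) ≤ (1 - α) / Φ 2 := by
    rw [le_div_iff₀' hΦ2]
    exact (mul_tsum_le_tsum_mul hΦ2 hΦ hb' hsum).trans hbound
  refine subordinate_comp_of_norm_lt (F := fun u => 1 - u)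
    (analyticOnNhd_tsum_mul_pow_succ hsummable) (by simp) fun z hz => ?_
  have hz : ‖z‖ < 1 := mem_ball_zero_iff.1 hz
  rw [Complex.norm_real, Real.norm_of_nonneg (div_pos (by linarith) hΦ2).le]
  calc ‖∑' n, (b (n + 2) : ℂ) * z ^ (n + 1)‖
      ≤ (∑' n, b (n + 2)) * ‖z‖ := hnorm ▸ norm_tsum_mul_pow_succ_le hsummable hz.le
    _ ≤ (1 - α) / Φ 2 * ‖z‖ := by gcongr
    _ < (1 - α) / Φ 2 := mul_lt_of_lt_one_right (div_pos (by linarith) hΦ2) hz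

/-- If `∑_{n ≥ 2} Φ_n b_n ≤ 1 - α` with `Φ_n > 0` increasing and `b_n ≥ 0`, then
`1 - ∑_{n ≥ 2} b_n z^{n-1} ≺ 1 - ((1-α)/Φ_2) z` on the unit disc. -/
theorem subordination_of_coeff_bound (α : ℝ) (hα0 : 0 ≤ α) (hα1 : α < 1)
    (Φ : ℕ → ℝ) (hΦpos : ∀ n : ℕ, 2 ≤ n → 0 < Φ n)
    (hΦmono : ∀ m n : ℕ, 2 ≤ m → m ≤ n → Φ m ≤ Φ n)
    (b : ℕ → ℝ) (hb : ∀ n, 0 ≤ b n)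
    (hsum : Summable (fun n : ℕ => Φ (n + 2) * b (n + 2)))
    (hbound : (∑' n : ℕ, Φ (n + 2) * b (n + 2)) ≤ 1 - α) :
    Subordinate (fun z => 1 - ∑' n : ℕ, (b (n + 2) : ℂ) * z ^ (n + 1))
      (fun z => 1 - (((1 - α) / Φ 2 : ℝ) : ℂ) * z) :=
  subordination_of_coeff_bound_general α hα1 Φ hΦpos hΦmono b hb hsum hbound
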